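/- arXiv:1807.11523 — 2 statements merged into one kernel-verified Lean document; each statement's English description precedes it below -/
import Mathlib

section
/- Let H be a monoid such that the reduced quotient H_red = H/H^× is finitely generated. Then for every nonunit a ∈ H there exists N = N(a) ∈ ℕ such that ρ(a^{tN}) = ρ(a^N) for every t ∈ ℕ; consequently the limit ρ̄(a) = lim_{n→∞} ρ(a^n) exists and equals ρ(a^N). -/
open Filter Topology

/-- The set of factorization lengths of `a`: the set of all `k` such that `a` is a
product of `k` atoms (irreducibles); by convention it is `{0}` for units. -/
noncomputable def lengthSet (H : Type*) [CommMonoid H] (a : H) : Set ℕ :=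
  open Classical in
  if IsUnit a then {0}
  else {k | ∃ f : Fin k → H, (∀ i, Irreducible (f i)) ∧ a = ∏ i, f i}

/-- The elasticity `ρ(a) = max L(a) / min L(a)` of an element of a BF-monoid,
with `ρ(a) = 1` for units. -/
noncomputable def elasticity (H : Type*) [CommMonoid H] (a : H) : ℝ :=
  open Classical in
  if IsUnit a then 1
  else ((sSup (lengthSet H a) : ℕ) : ℝ) / ((sInf (lengthSet H a) : ℕ) : ℝ)

/-- The elasticity `ρ(H) = sup {ρ(a) : a ∈ H} ∈ ℝ≥1 ∪ {∞}` of the monoid `H`. -/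
noncomputable def monoidElasticity (H : Type*) [CommMonoid H] : EReal :=
  ⨆ a : H, ((elasticity H a : ℝ) : EReal)

/-- The set `R̄(H)` of asymptotic elasticities `ρ̄(a) = lim_{n → ∞} ρ(aⁿ)`
of nonunits `a ∈ H` (membership requires the limit to exist). -/
def asympSet (H : Type*) [CommMonoid H] : Set EReal :=
  {r | ∃ a : H, ¬ IsUnit a ∧
    Tendsto (fun n : ℕ => ((elasticity H (a ^ n) : ℝ) : EReal)) atTop (nhds r)}

/-- `H` is locally finitely generated: for every `a ∈ H` there are only finitely many
atoms, up to associates, dividing some power of `a`. -/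
def LocallyFinitelyGenerated (H : Type*) [CommMonoid H] : Prop :=
  ∀ a : H, {u : Associates H | Irreducible u ∧ ∃ n : ℕ, u ∣ Associates.mk (a ^ n)}.Finite

/-- `H` is a BF-monoid: atomic (every nonunit has a factorization into atoms) and
all sets of lengths are finite. -/
def IsBFMonoid (H : Type*) [CommMonoid H] : Prop :=
  (∀ a : H, ¬ IsUnit a → (lengthSet H a).Nonempty) ∧ ∀ a : H, (lengthSet H a).Finite

/-- `(k, ℓ) ≠ (0,0)` is a nice pair with respect to `(a, b)` if
`max L((aᵏbˡ)ᵗ) = t · max L(aᵏbˡ)` and `min L((aᵏbˡ)ᵗ) = t · min L(aᵏbˡ)` for all `t ∈ ℕ`. -/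
def IsNicePair (H : Type*) [CommMonoid H] (a b : H) (k ℓ : ℕ) : Prop :=
  ¬ (k = 0 ∧ ℓ = 0) ∧ ∀ t : ℕ, 0 < t →
    sSup (lengthSet H ((a ^ k * b ^ ℓ) ^ t)) = t * sSup (lengthSet H (a ^ k * b ^ ℓ)) ∧
    sInf (lengthSet H ((a ^ k * b ^ ℓ) ^ t)) = t * sInf (lengthSet H (a ^ k * b ^ ℓ))

/-- `H` is strongly primary: `H ≠ H^×` and for every nonunit `a` there is `n ∈ ℕ`
such that every product of `n` nonunits of `H` is divisible by `a`. -/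
def StronglyPrimary (H : Type*) [CommMonoid H] : Prop :=
  (∃ a : H, ¬ IsUnit a) ∧ ∀ a : H, ¬ IsUnit a → ∃ n : ℕ, 0 < n ∧
    ∀ f : Fin n → H, (∀ i, ¬ IsUnit (f i)) → a ∣ ∏ i, f i

/-- `H` is half-factorial: atomic and `|L(a)| = 1` for every `a ∈ H`. -/
def IsHalfFactorial (H : Type*) [CommMonoid H] : Prop :=
  ∀ a : H, ∃ k : ℕ, lengthSet H a = {k}

/-!
Pass to the reduced monoid `H_red`, which is finitely generated, hence atomic with finitely many
atoms. The pairs `(n, ℓ)` with `ℓ ∈ L(aⁿ)` form a submonoid `G` of `ℕ × ℕ`. It is the image of the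
submonoid of pairs `(n, z)`, `z` a factorization of `aⁿ`, which cancellativity makes subtractive
in `ℕ × ℕ^(atoms)`, so that it is finitely generated by Dickson's lemma; hence `G` is finitely
generated, and the slope `ℓ / n` on `G` attains a maximum at some `(n₁, ℓ₁)` and a minimum at some
`(n₂, ℓ₂)`. For `N = n₁ n₂` this gives `max L(a^{tN}) = t n₂ ℓ₁` and `min L(a^{tN}) = t n₁ ℓ₂`,
so `ρ(a^{tN}) = ρ(a^N)`. Since `n ↦ min L(aⁿ)` is subadditive and `n ↦ max L(aⁿ)` superadditive,
Fekete's lemma gives `min L(aⁿ) / n → ℓ₂ / n₂` and `max L(aⁿ) / n → ℓ₁ / n₁`, hence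
`ρ(aⁿ) → ρ(a^N)`.
-/

theorem Subadditive.tendsto_div_of_forall_le {u : ℕ → ℝ} (h : Subadditive u) {n₀ : ℕ} (hn₀ : n₀ ≠ 0)
    (hmin : ∀ n ≠ 0, u n₀ / n₀ ≤ u n / n) : Tendsto (fun n => u n / n) atTop (𝓝 (u n₀ / n₀)) := by
  have hbdd : BddBelow (Set.range fun n => u n / n) := by
    refine ⟨min 0 (u n₀ / n₀), ?_⟩
    rintro _ ⟨n, rfl⟩
    rcases eq_or_ne n 0 with rfl | hn
    · simp
    · exact (min_le_right _ _).trans (hmin n hn)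
  have hlim := h.tendsto_lim hbdd
  have hge : u n₀ / n₀ ≤ h.lim := by
    refine ge_of_tendsto hlim ?_
    filter_upwards [eventually_ne_atTop 0] with n hn using hmin n hn
  rwa [le_antisymm (h.lim_le_div hbdd hn₀) hge] at hlim

namespace AddSubmonoid

def fiber (G : AddSubmonoid (ℕ × ℕ)) (n : ℕ) : Set ℕ := {ℓ | (n, ℓ) ∈ G}

noncomputable def fiberRatio (G : AddSubmonoid (ℕ × ℕ)) (n : ℕ) : ℝ :=
  ((sSup (G.fiber n) : ℕ) : ℝ) / ((sInf (G.fiber n) : ℕ) : ℝ)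

variable {G : AddSubmonoid (ℕ × ℕ)}

theorem mem_fiber {n ℓ : ℕ} : ℓ ∈ G.fiber n ↔ (n, ℓ) ∈ G := Iff.rfl

theorem add_mem_fiber {m n a b : ℕ} (ha : a ∈ G.fiber m) (hb : b ∈ G.fiber n) :
    a + b ∈ G.fiber (m + n) :=
  G.add_mem ha hb

theorem mul_mem_fiber {n ℓ : ℕ} (h : ℓ ∈ G.fiber n) (t : ℕ) : t * ℓ ∈ G.fiber (t * n) := by
  simpa [mem_fiber] using G.nsmul_mem h t

theorem exists_max_slope (hG : G.FG) (hpos : ∀ p ∈ G, p ≠ 0 → 0 < p.1) (hne : ∃ p ∈ G, p ≠ 0) :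
    ∃ q ∈ G, 0 < q.1 ∧ ∀ p ∈ G, p.2 * q.1 ≤ q.2 * p.1 := by
  classical
  obtain ⟨B, rfl⟩ := hG
  have hB : (B.erase 0).Nonempty := by
    obtain ⟨p, hp, hp0⟩ := hne
    by_contra hB
    refine hp0 (mem_bot.1 (closure_le.2 (fun b hb => ?_) hp))
    exact mem_bot.2 (by_contra fun hb0 => hB ⟨b, Finset.mem_erase.2 ⟨hb0, hb⟩⟩)
  obtain ⟨q, hqB, hq⟩ := (B.erase 0).exists_max_image (fun p => (p.2 : ℚ) / p.1) hB
  obtain ⟨hq0, hqB⟩ := Finset.mem_erase.1 hqB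
  have hq1 := hpos q (subset_closure hqB) hq0
  refine ⟨q, subset_closure hqB, hq1, fun p hp => ?_⟩
  let slopeLE : AddSubmonoid (ℕ × ℕ) :=
    { carrier := {p | p.2 * q.1 ≤ q.2 * p.1}
      add_mem' := fun {a b} ha hb => by
        simp only [Set.mem_ofPred_eq, Prod.fst_add, Prod.snd_add] at *; nlinarith
      zero_mem' := by simp }
  refine (closure_le (S := slopeLE)).2 (fun b hb => ?_) hp
  rcases eq_or_ne b 0 with rfl | hb0
  · simp [slopeLE]
  have hb1 := hpos b (subset_closure hb) hb0
  have := hq b (Finset.mem_erase.2 ⟨hb0, hb⟩)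
  rw [div_le_div_iff₀ (by exact_mod_cast hb1) (by exact_mod_cast hq1)] at this
  exact_mod_cast this

theorem exists_min_slope (hG : G.FG) (hpos₁ : ∀ p ∈ G, p ≠ 0 → 0 < p.1)
    (hpos₂ : ∀ p ∈ G, p ≠ 0 → 0 < p.2) (hne : ∃ p ∈ G, p ≠ 0) :
    ∃ q ∈ G, 0 < q.1 ∧ ∀ p ∈ G, q.2 * p.1 ≤ p.2 * q.1 := by
  -- the minimal slope of `G` is the reciprocal of the maximal slope of its mirror image
  let swap : ℕ × ℕ ≃+ ℕ × ℕ := AddEquiv.prodComm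
  have mem_swap {p : ℕ × ℕ} : p ∈ G.map swap.toAddMonoidHom ↔ p.swap ∈ G := mem_map_equiv
  have swap_ne {p : ℕ × ℕ} (h : p ≠ 0) : p.swap ≠ 0 := fun h' => h (by rw [← p.swap_swap, h']; rfl)
  obtain ⟨q, hq, hq1, hmax⟩ := exists_max_slope (hG.map _)
    (fun p hp hp0 => hpos₂ _ (mem_swap.1 hp) (swap_ne hp0))
    (by obtain ⟨p, hp, hp0⟩ := hne; exact ⟨p.swap, mem_swap.2 (by simpa using hp), swap_ne hp0⟩)
  have hq₀ : q.swap ≠ 0 := swap_ne fun h => hq1.ne' (congrArg Prod.fst h)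
  refine ⟨q.swap, mem_swap.1 hq, hpos₁ _ (mem_swap.1 hq) hq₀, fun p hp => ?_⟩
  have := hmax p.swap (mem_swap.2 (by simpa using hp))
  simp only [Prod.fst_swap, Prod.snd_swap] at this ⊢
  linarith [mul_comm p.1 q.1, mul_comm p.2 q.2]

theorem bddAbove_fiber {q : ℕ × ℕ} (hq₁ : 0 < q.1) (hmax : ∀ p ∈ G, p.2 * q.1 ≤ q.2 * p.1)
    (n : ℕ) : BddAbove (G.fiber n) :=
  ⟨q.2 * n, fun ℓ hℓ => (Nat.le_mul_of_pos_right ℓ hq₁).trans (hmax _ hℓ)⟩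

theorem sSup_fiber_mul {q : ℕ × ℕ} (hq : q ∈ G) (hq₁ : 0 < q.1)
    (hmax : ∀ p ∈ G, p.2 * q.1 ≤ q.2 * p.1) (t : ℕ) : sSup (G.fiber (t * q.1)) = t * q.2 := by
  refine IsGreatest.csSup_eq ⟨mul_mem_fiber hq t, fun ℓ hℓ => ?_⟩
  have := hmax _ hℓ
  exact Nat.le_of_mul_le_mul_right (by simpa [mul_comm, mul_left_comm] using this) hq₁

theorem sInf_fiber_mul {q : ℕ × ℕ} (hq : q ∈ G) (hq₁ : 0 < q.1)
    (hmin : ∀ p ∈ G, q.2 * p.1 ≤ p.2 * q.1) (t : ℕ) : sInf (G.fiber (t * q.1)) = t * q.2 := by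
  refine IsLeast.csInf_eq ⟨mul_mem_fiber hq t, fun ℓ hℓ => ?_⟩
  have := hmin _ hℓ
  exact Nat.le_of_mul_le_mul_right (by simpa [mul_comm, mul_left_comm] using this) hq₁

theorem tendsto_sSup_fiber_div (hfib : ∀ n, (G.fiber n).Nonempty) {q : ℕ × ℕ} (hq : q ∈ G)
    (hq₁ : 0 < q.1) (hmax : ∀ p ∈ G, p.2 * q.1 ≤ q.2 * p.1) :
    Tendsto (fun n => ((sSup (G.fiber n) : ℕ) : ℝ) / n) atTop (𝓝 (q.2 / q.1)) := by
  have hmem n : sSup (G.fiber n) ∈ G.fiber n := Nat.sSup_mem (hfib n) (bddAbove_fiber hq₁ hmax n)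
  have hsub : Subadditive fun n => -((sSup (G.fiber n) : ℕ) : ℝ) := fun m n => by
    have := le_csSup (bddAbove_fiber hq₁ hmax _) (add_mem_fiber (hmem m) (hmem n))
    rw [← neg_add, neg_le_neg_iff]
    exact_mod_cast this
  have hq' : sSup (G.fiber q.1) = q.2 := by simpa using sSup_fiber_mul hq hq₁ hmax 1
  have hlim := hsub.tendsto_div_of_forall_le hq₁.ne' fun n hn => by
    rw [hq', neg_div, neg_div, neg_le_neg_iff, div_le_div_iff₀ (by positivity) (by positivity)]
    exact_mod_cast hmax _ (hmem n)
  simpa [hq', neg_div] using hlim.neg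

theorem tendsto_sInf_fiber_div (hfib : ∀ n, (G.fiber n).Nonempty) {q : ℕ × ℕ} (hq : q ∈ G)
    (hq₁ : 0 < q.1) (hmin : ∀ p ∈ G, q.2 * p.1 ≤ p.2 * q.1) :
    Tendsto (fun n => ((sInf (G.fiber n) : ℕ) : ℝ) / n) atTop (𝓝 (q.2 / q.1)) := by
  have hmem n : sInf (G.fiber n) ∈ G.fiber n := Nat.sInf_mem (hfib n)
  have hsub : Subadditive fun n => ((sInf (G.fiber n) : ℕ) : ℝ) := fun m n => by
    dsimp only
    exact_mod_cast Nat.sInf_le (add_mem_fiber (hmem m) (hmem n))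
  have hq' : sInf (G.fiber q.1) = q.2 := by simpa using sInf_fiber_mul hq hq₁ hmin 1
  have hlim := hsub.tendsto_div_of_forall_le hq₁.ne' fun n hn => by
    rw [hq', div_le_div_iff₀ (by positivity) (by positivity)]
    exact_mod_cast hmin _ (hmem n)
  simpa [hq'] using hlim

theorem exists_fiberRatio_periodic (hG : G.FG) (hpos₁ : ∀ p ∈ G, p ≠ 0 → 0 < p.1)
    (hpos₂ : ∀ p ∈ G, p ≠ 0 → 0 < p.2) {ℓ₀ : ℕ} (hone : (1, ℓ₀) ∈ G) :
    ∃ N, 0 < N ∧ (∀ t, 0 < t → G.fiberRatio (t * N) = G.fiberRatio N) ∧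
      Tendsto G.fiberRatio atTop (𝓝 (G.fiberRatio N)) := by
  have hfib n : (G.fiber n).Nonempty := ⟨n * ℓ₀, by simpa using mul_mem_fiber hone n⟩
  have hne : ∃ p ∈ G, p ≠ 0 := ⟨_, hone, by simp⟩
  obtain ⟨q, hq, hq₁, hmax⟩ := exists_max_slope hG hpos₁ hne
  obtain ⟨r, hr, hr₁, hmin⟩ := exists_min_slope hG hpos₁ hpos₂ hne
  have hr₂ : 0 < r.2 := hpos₂ r hr fun h => hr₁.ne' (congrArg Prod.fst h)
  have hratio t (ht : 0 < t) : G.fiberRatio (t * (q.1 * r.1)) = (q.2 / q.1) / (r.2 / r.1) := by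
    have hsup := sSup_fiber_mul hq hq₁ hmax (t * r.1)
    have hinf := sInf_fiber_mul hr hr₁ hmin (t * q.1)
    rw [fiberRatio, show t * (q.1 * r.1) = t * r.1 * q.1 by ring, hsup,
      show t * r.1 * q.1 = t * q.1 * r.1 by ring, hinf]
    field_simp
    push_cast
    ring
  have hN : G.fiberRatio (q.1 * r.1) = (q.2 / q.1) / (r.2 / r.1) := by
    simpa using hratio 1 one_pos
  refine ⟨q.1 * r.1, by positivity, fun t ht => by rw [hratio t ht, hN], ?_⟩
  rw [hN]
  refine ((tendsto_sSup_fiber_div hfib hq hq₁ hmax).div (tendsto_sInf_fiber_div hfib hr hr₁ hmin)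
    (by positivity)).congr' ?_
  filter_upwards [eventually_ne_atTop 0] with n hn
  rw [Pi.div_apply, fiberRatio, div_div_div_cancel_right₀ (by exact_mod_cast hn)]

end AddSubmonoid

instance Multiset.instWellQuasiOrderedLE {α : Type*} [Finite α] :
    WellQuasiOrderedLE (Multiset α) := by
  classical
  exact (Finsupp.orderIsoMultiset (ι := α)).wellQuasiOrderedLE_iff.1 inferInstance

section Factorizations

variable {M : Type*} [CommMonoid M]

theorem mem_lengthSet_iff {x : M} (hx : ¬IsUnit x) {ℓ : ℕ} :
    ℓ ∈ lengthSet M x ↔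
      ∃ s : Multiset M, (∀ y ∈ s, Irreducible y) ∧ Multiset.card s = ℓ ∧ s.prod = x := by
  rw [lengthSet, if_neg hx]
  constructor
  · rintro ⟨f, hf, rfl⟩
    exact ⟨Finset.univ.val.map f, by simpa using hf, by simp,
      (Finset.prod_eq_multiset_prod _ _).symm⟩
  · rintro ⟨⟨l⟩, hl, rfl, rfl⟩
    exact ⟨fun i => l[i.1], fun i => hl _ (List.getElem_mem _), (Fin.prod_univ_getElem l).symm⟩

theorem isUnit_prod_irreducible_iff {s : Multiset {x : M // Irreducible x}} :
    IsUnit (s.map Subtype.val).prod ↔ s = 0 := by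
  refine ⟨fun h => ?_, by rintro rfl; simp⟩
  rcases Multiset.empty_or_exists_mem s with hs | ⟨y, hy⟩
  · exact hs
  obtain ⟨t, rfl⟩ := Multiset.exists_cons_of_mem hy
  rw [Multiset.map_cons, Multiset.prod_cons] at h
  exact absurd (isUnit_of_mul_isUnit_left h) y.2.not_isUnit

end Factorizations

namespace Associates

variable {H : Type*} [CommMonoid H]

theorem irreducible_mk_iff {x : H} : Irreducible (Associates.mk x) ↔ Irreducible x := by
  refine ⟨fun h => ⟨fun hx => h.not_isUnit (isUnit_mk.2 hx), fun b c hbc => ?_⟩,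
    fun h => ⟨fun hx => h.not_isUnit (isUnit_mk.1 hx), fun b c hbc => ?_⟩⟩
  · have := h.isUnit_or_isUnit (by rw [hbc, ← mk_mul_mk])
    simpa only [isUnit_mk] using this
  · obtain ⟨b, rfl⟩ := mk_surjective b
    obtain ⟨c, rfl⟩ := mk_surjective c
    rw [mk_mul_mk, mk_eq_mk_iff_associated] at hbc
    simpa only [isUnit_mk] using (hbc.irreducible h).isUnit_or_isUnit rfl

theorem lengthSet_mk (x : H) : lengthSet (Associates H) (Associates.mk x) = lengthSet H x := by
  by_cases hx : IsUnit x
  · simp [lengthSet, hx]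
  ext ℓ
  rw [mem_lengthSet_iff hx, mem_lengthSet_iff (isUnit_mk.not.2 hx)]
  constructor
  · rintro ⟨t, ht, rfl, hprod⟩
    obtain ⟨s, rfl⟩ := Multiset.map_surjective_of_surjective mk_surjective t
    rw [prod_mk, mk_eq_mk_iff_associated] at hprod
    obtain ⟨u, hu⟩ := hprod
    rcases Multiset.empty_or_exists_mem s with rfl | ⟨y, hy⟩
    · exact absurd (by simp [← hu]) hx
    obtain ⟨s, rfl⟩ := Multiset.exists_cons_of_mem hy
    refine ⟨(y * u) ::ₘ s, fun z hz => ?_, by simp, by rw [← hu]; simp [mul_right_comm]⟩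
    have hirr : ∀ z ∈ y ::ₘ s, Irreducible z :=
      fun z hz => irreducible_mk_iff.1 (ht _ (Multiset.mem_map_of_mem _ hz))
    rcases Multiset.mem_cons.1 hz with rfl | hz
    · exact Associated.irreducible ⟨u, rfl⟩ (hirr y (Multiset.mem_cons_self _ _))
    · exact hirr z (Multiset.mem_cons_of_mem hz)
  · rintro ⟨s, hs, rfl, rfl⟩
    exact ⟨s.map Associates.mk, by simpa [irreducible_mk_iff] using hs, by simp, prod_mk⟩

theorem elasticity_mk (x : H) : elasticity (Associates H) (Associates.mk x) = elasticity H x := by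
  by_cases hx : IsUnit x
  · simp [elasticity, hx]
  · simp [elasticity, hx, lengthSet_mk]

instance instCancelCommMonoid {M : Type*} [CancelCommMonoid M] :
    CancelCommMonoid (Associates M) where
  mul_left_cancel a b c h := by
    obtain ⟨a, rfl⟩ := mk_surjective a
    obtain ⟨b, rfl⟩ := mk_surjective b
    obtain ⟨c, rfl⟩ := mk_surjective c
    obtain ⟨u, hu⟩ := mk_eq_mk_iff_associated.1 (by simpa only [mk_mul_mk] using h)
    exact mk_eq_mk_iff_associated.2 ⟨u, mul_left_cancel (by rw [← mul_assoc, hu])⟩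

end Associates

theorem Submonoid.mem_closure_erase_or_dvd {M : Type*} [CommMonoid M] [DecidableEq M]
    {S : Finset M} (g : M) {x : M} (hx : x ∈ Submonoid.closure (S : Set M)) :
    x ∈ Submonoid.closure (S.erase g : Set M) ∨ g ∣ x := by
  induction hx using Submonoid.closure_induction with
  | mem s hs =>
    by_cases hsg : s = g
    · exact .inr (hsg ▸ dvd_rfl)
    · exact .inl (Submonoid.subset_closure (Finset.mem_erase.2 ⟨hsg, hs⟩))
  | one => exact .inl (one_mem _)
  | mul x y _ _ hx hy =>
    rcases hx with hx | hx
    · rcases hy with hy | hy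
      · exact .inl (mul_mem hx hy)
      · exact .inr (hy.mul_left x)
    · exact .inr (hx.mul_right y)

theorem Submonoid.mem_of_irreducible_of_mem_closure {M : Type*} [CommMonoid M] [Subsingleton Mˣ]
    {S : Set M} (hS : ∀ x ∈ S, ¬IsUnit x) {v : M} (hv : Irreducible v)
    (hvS : v ∈ Submonoid.closure S) : v ∈ S := by
  obtain ⟨l, hl, rfl⟩ := Submonoid.exists_multiset_of_mem_closure hvS
  rcases Multiset.empty_or_exists_mem l with rfl | ⟨y, hy⟩
  · exact absurd hv (by simp)
  obtain ⟨t, rfl⟩ := Multiset.exists_cons_of_mem hy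
  rw [Multiset.prod_cons] at hv
  rcases hv.isUnit_or_isUnit rfl with h | h
  · exact absurd h (hS y (hl y hy))
  · rw [Multiset.prod_cons, isUnit_iff_eq_one.1 h, mul_one]
    exact hl y hy

namespace Monoid.FG

variable {M : Type*} [CancelCommMonoid M] [Subsingleton Mˣ]

theorem exists_finset_irreducible (h : Monoid.FG M) :
    ∃ S : Finset M, Submonoid.closure (S : Set M) = ⊤ ∧ ∀ x ∈ S, Irreducible x := by
  classical
  -- a generating set that is minimal under inclusion consists of atoms
  obtain ⟨S, hS, hmin⟩ := (wellFounded_lt (α := Finset M)).has_min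
    {S | Submonoid.closure (S : Set M) = ⊤} (Monoid.fg_def.1 h)
  refine ⟨S, hS, fun g hg => ?_⟩
  have hg' : g ∉ Submonoid.closure (S.erase g : Set M) := fun hmem => by
    refine hmin (S.erase g) (top_unique (hS ▸ Submonoid.closure_le.2 fun s hs => ?_))
      (Finset.erase_ssubset hg)
    by_cases hsg : s = g
    · exact hsg ▸ hmem
    · exact Submonoid.subset_closure (Finset.mem_erase.2 ⟨hsg, hs⟩)
  refine ⟨fun hu => hg' (isUnit_iff_eq_one.1 hu ▸ one_mem _), fun b c hbc => ?_⟩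
  by_contra! hbc'
  have mem_erase (y z : M) (hyz : g = y * z) (hz : ¬IsUnit z) :
      y ∈ Submonoid.closure (S.erase g : Set M) := by
    refine (Submonoid.mem_closure_erase_or_dvd g ((Submonoid.eq_top_iff' _).1 hS y)).resolve_right ?_
    rintro ⟨d, rfl⟩
    rw [mul_assoc, eq_comm, mul_eq_left] at hyz
    exact hz (IsUnit.of_mul_eq_one_right d hyz)
  have hbc_mem :=
    mul_mem (mem_erase b c hbc hbc'.2) (mem_erase c b (hbc.trans (mul_comm b c)) hbc'.1)
  rw [← hbc] at hbc_mem
  exact hg' hbc_mem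

theorem finite_setOf_irreducible (h : Monoid.FG M) : {x : M | Irreducible x}.Finite := by
  obtain ⟨S, hS, hirr⟩ := h.exists_finset_irreducible
  refine S.finite_toSet.subset fun v hv => ?_
  exact Submonoid.mem_of_irreducible_of_mem_closure (fun x hx => (hirr x hx).not_isUnit) hv
    ((Submonoid.eq_top_iff' _).1 hS v)

theorem exists_multiset_irreducible_prod_eq (h : Monoid.FG M) (x : M) :
    ∃ s : Multiset {y : M // Irreducible y}, (s.map Subtype.val).prod = x := by
  obtain ⟨S, hS, hirr⟩ := h.exists_finset_irreducible
  obtain ⟨l, hl, rfl⟩ := Submonoid.exists_multiset_of_mem_closure ((Submonoid.eq_top_iff' _).1 hS x)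
  lift l to Multiset {y : M // Irreducible y} using fun y hy => hirr y (hl y hy)
  exact ⟨l, rfl⟩

end Monoid.FG

section LengthPairs

variable {M : Type*} [CommMonoid M]

def factorizationPairs (a : M) : AddSubmonoid (ℕ × Multiset {x : M // Irreducible x}) where
  carrier := {p | (p.2.map Subtype.val).prod = a ^ p.1}
  add_mem' {p q} hp hq := by
    simp only [Set.mem_ofPred_eq, Prod.fst_add, Prod.snd_add, Multiset.map_add,
      Multiset.prod_add, pow_add] at *
    rw [hp, hq]
  zero_mem' := by simp

theorem mem_factorizationPairs {a : M} {p : ℕ × Multiset {x : M // Irreducible x}} :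
    p ∈ factorizationPairs a ↔ (p.2.map Subtype.val).prod = a ^ p.1 :=
  Iff.rfl

def lengthPairs (a : M) : AddSubmonoid (ℕ × ℕ) :=
  (factorizationPairs a).map ((AddMonoidHom.id ℕ).prodMap Multiset.cardHom)

theorem mem_lengthPairs {a : M} {n ℓ : ℕ} :
    (n, ℓ) ∈ lengthPairs a ↔ ∃ s : Multiset {x : M // Irreducible x},
      (s.map Subtype.val).prod = a ^ n ∧ Multiset.card s = ℓ := by
  simp [lengthPairs, mem_factorizationPairs]

theorem fiber_lengthPairs {a : M} {n : ℕ} (hn : ¬IsUnit (a ^ n)) :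
    (lengthPairs a).fiber n = lengthSet M (a ^ n) := by
  ext ℓ
  rw [AddSubmonoid.mem_fiber, mem_lengthPairs, mem_lengthSet_iff hn]
  constructor
  · rintro ⟨s, hs, rfl⟩
    refine ⟨s.map Subtype.val, fun y hy => ?_, by simp, hs⟩
    obtain ⟨z, -, rfl⟩ := Multiset.mem_map.1 hy
    exact z.2
  · rintro ⟨s, hs, rfl, hprod⟩
    lift s to Multiset {x : M // Irreducible x} using hs
    exact ⟨s, hprod, by simp⟩

theorem lengthPairs_fst_pos (a : M) : ∀ p ∈ lengthPairs a, p ≠ 0 → 0 < p.1 := by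
  rintro ⟨n, ℓ⟩ hp hne
  obtain ⟨s, hs, rfl⟩ := mem_lengthPairs.1 hp
  refine Nat.pos_of_ne_zero fun hn => hne ?_
  subst hn
  rw [pow_zero] at hs
  obtain rfl : s = 0 := isUnit_prod_irreducible_iff.1 (by rw [hs]; exact isUnit_one)
  rfl

theorem lengthPairs_snd_pos {a : M} (ha : ¬IsUnit a) : ∀ p ∈ lengthPairs a, p ≠ 0 → 0 < p.2 := by
  rintro ⟨n, ℓ⟩ hp hne
  obtain ⟨s, hs, rfl⟩ := mem_lengthPairs.1 hp
  refine Nat.pos_of_ne_zero fun hs₀ => hne ?_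
  rw [Multiset.card_eq_zero] at hs₀
  subst hs₀
  obtain rfl : n = 0 := by
    by_contra hn
    exact ha ((isUnit_pow_iff hn).1 (by simp [← hs]))
  rfl

end LengthPairs

section CancelCommMonoid

variable {M : Type*} [CancelCommMonoid M]

theorem factorizationPairs_fg [Finite {x : M // Irreducible x}] (a : M) :
    (factorizationPairs a).FG := by
  refine AddSubmonoid.fg_of_subtractive fun p hp q hpq => ?_
  rw [mem_factorizationPairs] at *
  simp only [Prod.fst_add, Prod.snd_add, Multiset.map_add, Multiset.prod_add, pow_add, hp] at hpq
  exact mul_left_cancel hpq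

theorem lengthPairs_fg [Finite {x : M // Irreducible x}] (a : M) : (lengthPairs a).FG :=
  (factorizationPairs_fg a).map _

theorem exists_elasticity_pow_periodic [Subsingleton Mˣ] (hfg : Monoid.FG M) {a : M}
    (ha : ¬IsUnit a) :
    ∃ N : ℕ, 0 < N ∧
      (∀ t : ℕ, 0 < t → elasticity M (a ^ (t * N)) = elasticity M (a ^ N)) ∧
      Tendsto (fun n : ℕ => elasticity M (a ^ n)) atTop (𝓝 (elasticity M (a ^ N))) := by
  have : Finite {x : M // Irreducible x} := hfg.finite_setOf_irreducible.to_subtype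
  obtain ⟨s, hs⟩ := hfg.exists_multiset_irreducible_prod_eq a
  obtain ⟨N, hN, hper, hlim⟩ := AddSubmonoid.exists_fiberRatio_periodic
    (lengthPairs_fg a) (lengthPairs_fst_pos a) (lengthPairs_snd_pos ha)
    (mem_lengthPairs.2 ⟨s, by rw [hs, pow_one], rfl⟩)
  have helast {n : ℕ} (hn : 0 < n) : elasticity M (a ^ n) = (lengthPairs a).fiberRatio n := by
    have hu : ¬IsUnit (a ^ n) := (isUnit_pow_iff hn.ne').not.2 ha
    rw [elasticity, if_neg hu, AddSubmonoid.fiberRatio, fiber_lengthPairs hu]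
  refine ⟨N, hN, fun t ht => by rw [helast (by positivity), helast hN, hper t ht], ?_⟩
  rw [helast hN]
  exact hlim.congr' (eventually_gt_atTop 0 |>.mono fun n hn => (helast hn).symm)

end CancelCommMonoid

/-- If `H_red = H/H^×` is finitely generated, then for every nonunit
`a ∈ H` there is `N ∈ ℕ` with `ρ(a^{tN}) = ρ(a^N)` for all `t ∈ ℕ`, and the limit
`ρ̄(a) = lim ρ(aⁿ)` exists and equals `ρ(a^N)`. -/
theorem statement7 (H : Type*) [CancelCommMonoid H]
    (hfg : Monoid.FG (Associates H)) (a : H) (ha : ¬ IsUnit a) :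
    ∃ N : ℕ, 0 < N ∧
      (∀ t : ℕ, 0 < t → elasticity H (a ^ (t * N)) = elasticity H (a ^ N)) ∧
      Tendsto (fun n : ℕ => elasticity H (a ^ n)) atTop (nhds (elasticity H (a ^ N))) := by
  obtain ⟨N, hN, hper, hlim⟩ :=
    exists_elasticity_pow_periodic hfg (Associates.isUnit_mk.not.2 ha : ¬IsUnit (Associates.mk a))
  simp only [← Associates.mk_pow, Associates.elasticity_mk] at hper hlim
  exact ⟨N, hN, hper, hlim⟩
end

section
/- Let H be a monoid such that the reduced quotient H_red = H/H^× is finitely generated and H ≠ H^×. Then there exists an atom b ∈ A(H) such that lim_{n→∞} ρ(b^n) = inf R̄(H); in particular, inf R̄(H) = min{lim_{n→∞} ρ(u^n) : u ∈ A(H)} and the infimum of R̄(H) is attained. -/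
/-!
By Dickson's lemma, the pairs `(n, s)` where `s` is a multiset of atoms of `H_red` with product
`aⁿ` are sums of finitely many minimal ones, each with `n ≥ 1` and `s ≠ 0`; hence every length in
`L(aⁿ)` lies between `n / N` and `C n`. Fekete's lemma, applied to the subadditive `min L(aⁿ)` and
the superadditive `max L(aⁿ)`, then gives `ρ̄(a) = λ(a) / μ(a)` with `μ(a) > 0`. As `λ` is
superadditive and `μ` subadditive in `a`, the mediant inequality yields
`ρ̄(ab) ≥ min (ρ̄(a), ρ̄(b))`, so `ρ̄(a)` dominates `ρ̄` of an atom dividing `a`. There are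
finitely many atoms up to associates, and one minimizing `ρ̄` realizes `inf R̄(H)`.
-/

open Filter Topology

instance Associates.instIsLeftCancelMul {H : Type*} [CancelCommMonoid H] :
    IsLeftCancelMul (Associates H) where
  mul_left_cancel := by
    rintro ⟨a⟩ ⟨b⟩ ⟨c⟩ h
    obtain ⟨u, hu⟩ := Quotient.exact' h
    exact Quotient.sound' ⟨u, mul_left_cancel (a := a) (by rwa [← mul_assoc])⟩

theorem Associates.irreducible_mk_iff_s10 {H : Type*} [CommMonoid H] {a : H} :
    Irreducible (Associates.mk a) ↔ Irreducible a := by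
  simp only [irreducible_iff, Associates.isUnit_mk, Associates.mk_surjective.forall,
    Associates.mk_mul_mk, Associates.mk_eq_mk_iff_associated]
  refine and_congr_right fun _ => ⟨fun h b c hbc => h b c (hbc ▸ Associated.refl _), ?_⟩
  rintro h b c ⟨u, hu⟩
  simpa using @h b (c * ↑u⁻¹) (by rw [← mul_assoc, ← hu, Units.mul_inv_cancel_right])

instance Multiset.wellQuasiOrderedLE {ι : Type*} [Finite ι] :
    WellQuasiOrderedLE (Multiset ι) := by
  classical exact Finsupp.orderIsoMultiset.wellQuasiOrderedLE_iff.1 inferInstance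

theorem Multiset.eq_zero_of_prod_eq_one {M : Type*} [CommMonoid M] {s : Multiset M}
    (hs : ∀ x ∈ s, ¬IsUnit x) (h : s.prod = 1) : s = 0 := by
  by_contra hne
  obtain ⟨x, hx⟩ := Multiset.exists_mem_of_ne_zero hne
  exact hs x hx (isUnit_of_dvd_one (h ▸ Multiset.dvd_prod hx))

section LengthBounds

variable {M : Type*} [CommMonoid M] [IsLeftCancelMul M]

theorem Multiset.prod_map_sub_eq_pow_sub {ι : Type*} [DecidableEq ι] (u : ι → M) {a : M}
    {n m : ℕ} {s t : Multiset ι} (hmn : m ≤ n) (hts : t ≤ s) (hs : (s.map u).prod = a ^ n)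
    (ht : (t.map u).prod = a ^ m) :
    ((s - t).map u).prod = a ^ (n - m) := by
  refine mul_left_cancel (a := (t.map u).prod) ?_
  rw [← Multiset.prod_add, ← Multiset.map_add, add_tsub_cancel_of_le hts, hs, ht, ← pow_add,
    add_tsub_cancel_of_le hmn]

theorem exists_card_bounds_of_prod_eq_pow {T : Set M} (hT : T.Finite) (hTu : ∀ t ∈ T, ¬IsUnit t)
    {a : M} (ha : ¬IsUnit a) :
    ∃ N C : ℕ, ∀ (n : ℕ) (s : Multiset M), (∀ t ∈ s, t ∈ T) → s.prod = a ^ n →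
      n ≤ N * Multiset.card s ∧ Multiset.card s ≤ C * n := by
  classical
  have : Finite T := hT.to_subtype
  let P : ℕ × Multiset T → Prop := fun p => p ≠ 0 ∧ (p.2.map (↑)).prod = a ^ p.1
  have hP : ∀ p, P p → 1 ≤ p.1 ∧ 1 ≤ Multiset.card p.2 := by
    rintro ⟨n, s⟩ ⟨hne, hs⟩
    have hn : n ≠ 0 := by
      rintro rfl
      have := Multiset.eq_zero_of_prod_eq_one (s := s.map ((↑) : T → M))
        (by simpa using fun t ht _ => hTu t ht) (by simpa using hs)
      simp_all
    refine ⟨Nat.one_le_iff_ne_zero.2 hn, Multiset.card_pos.2 ?_⟩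
    rintro rfl
    exact ha ((isUnit_pow_iff hn).1 (by simp [← hs]))
  obtain ⟨N, hN⟩ := ((WellQuasiOrderedLE.finite_of_isAntichain
    (setOfPred_minimal_antichain P)).image Prod.fst).bddAbove
  obtain ⟨C, hC⟩ := ((WellQuasiOrderedLE.finite_of_isAntichain
    (setOfPred_minimal_antichain P)).image (Multiset.card ∘ Prod.snd)).bddAbove
  suffices key : ∀ (n : ℕ) (s : Multiset T), (s.map (↑)).prod = a ^ n →
      n ≤ N * Multiset.card s ∧ Multiset.card s ≤ C * n by
    refine ⟨N, C, fun n s hsT hs => ?_⟩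
    lift s to Multiset T using hsT
    simpa using key n s hs
  intro n
  induction n using Nat.strong_induction_on with
  | _ n ih =>
  intro s hs
  by_cases h0 : (n, s) = 0
  · simp_all [Prod.ext_iff]
  obtain ⟨⟨m, t⟩, ⟨hmn, hts⟩, hmin⟩ := exists_minimal_le_of_wellFoundedLT P (n, s) ⟨h0, hs⟩
  obtain ⟨hm1, ht1⟩ : 1 ≤ m ∧ 1 ≤ Multiset.card t := hP _ hmin.1
  have hmN : m ≤ N := hN ⟨_, hmin, rfl⟩
  have htC : Multiset.card t ≤ C := hC ⟨_, hmin, rfl⟩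
  obtain ⟨ih₁, ih₂⟩ := ih (n - m) (by simp at hmn; omega) (s - t)
    (Multiset.prod_map_sub_eq_pow_sub _ hmn hts hs hmin.1.2)
  have hcard : Multiset.card s = Multiset.card t + Multiset.card (s - t) := by
    rw [← Multiset.card_add, add_tsub_cancel_of_le hts]
  obtain ⟨k, rfl⟩ := Nat.exists_eq_add_of_le hmn
  rw [Nat.add_sub_cancel_left] at ih₁ ih₂
  rw [hcard]
  constructor <;> nlinarith [Nat.mul_le_mul_left N ht1, Nat.mul_le_mul_left C hm1]

end LengthBounds

section FinitelyGenerated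

variable {M : Type*} [CommMonoid M] [Subsingleton Mˣ] [Monoid.FG M]

theorem Monoid.FG.exists_finite_nonunits_forall_exists_prod_eq :
    ∃ T : Set M, T.Finite ∧ (∀ t ∈ T, ¬IsUnit t) ∧
      ∀ x : M, ∃ s : Multiset M, (∀ t ∈ s, t ∈ T) ∧ s.prod = x := by
  classical
  obtain ⟨S, hS, hSfin⟩ := Monoid.fg_iff.1 ‹Monoid.FG M›
  refine ⟨S \ {1}, hSfin.sdiff, fun t ht => by simpa using ht.2, fun x => ?_⟩
  obtain ⟨s, hsS, rfl⟩ := Submonoid.exists_multiset_of_mem_closure (hS ▸ Submonoid.mem_top x)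
  refine ⟨s.filter (· ≠ 1), fun t ht => ?_, ?_⟩
  · rw [Multiset.mem_filter] at ht
    exact ⟨hsS t ht.1, ht.2⟩
  · have hones : (s.filter (¬· ≠ 1)).prod = 1 :=
      Multiset.prod_eq_one (by simp +contextual [Multiset.mem_filter])
    rw [← Multiset.prod_filter_mul_prod_filter_not (· ≠ 1) (s := s), hones, mul_one]

theorem Monoid.FG.finite_setOf_irreducible_s10 : {x : M | Irreducible x}.Finite := by
  obtain ⟨T, hT, hTu, hrep⟩ := Monoid.FG.exists_finite_nonunits_forall_exists_prod_eq (M := M)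
  refine hT.subset fun x hx => ?_
  obtain ⟨s, hsT, rfl⟩ := hrep x
  induction s using Multiset.induction_on with
  | empty => exact absurd isUnit_one hx.not_isUnit
  | cons t s _ =>
    have htT := hsT t (Multiset.mem_cons_self t s)
    rw [Multiset.prod_cons] at hx ⊢
    rcases hx.isUnit_or_isUnit rfl with ht | hs
    · exact absurd ht (hTu t htT)
    · rwa [isUnit_iff_eq_one.1 hs, mul_one]

variable [IsLeftCancelMul M]

/-- A representation of `x` by a maximal number of generators consists of irreducibles: a
reducible factor could be split into further generators. -/
theorem Monoid.FG.exists_multiset_irreducible_prod_eq_s10 (x : M) :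
    ∃ s : Multiset M, (∀ y ∈ s, Irreducible y) ∧ s.prod = x := by
  classical
  obtain ⟨T, hT, hTu, hrep⟩ := Monoid.FG.exists_finite_nonunits_forall_exists_prod_eq (M := M)
  by_cases hx : IsUnit x
  · exact ⟨0, by simp, by simp [isUnit_iff_eq_one.1 hx]⟩
  obtain ⟨_, C, hC⟩ := exists_card_bounds_of_prod_eq_pow hT hTu hx
  let R := {s : Multiset M | (∀ t ∈ s, t ∈ T) ∧ s.prod = x}
  have hRbdd : BddAbove (Multiset.card '' R) := by
    refine ⟨C, ?_⟩
    rintro _ ⟨s, ⟨hsT, hs⟩, rfl⟩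
    simpa using (hC 1 s hsT (by rw [pow_one, hs])).2
  obtain ⟨s, ⟨hsT, hs⟩, hcard⟩ := Nat.sSup_mem ((show R.Nonempty from hrep x).image _) hRbdd
  refine ⟨s, fun y hy => ?_, hs⟩
  by_contra hirr
  obtain ⟨b, c, rfl, hb, hc⟩ : ∃ b c, y = b * c ∧ ¬IsUnit b ∧ ¬IsUnit c := by
    rw [irreducible_iff] at hirr
    push Not at hirr
    exact hirr (hTu y (hsT y hy))
  obtain ⟨sb, hsbT, rfl⟩ := hrep b
  obtain ⟨sc, hscT, rfl⟩ := hrep c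
  have hsb : 0 < Multiset.card sb := Multiset.card_pos.2 (by rintro rfl; simp at hb)
  have hsc : 0 < Multiset.card sc := Multiset.card_pos.2 (by rintro rfl; simp at hc)
  have hmem : s.erase (sb.prod * sc.prod) + sb + sc ∈ R := by
    refine ⟨fun t ht => ?_, ?_⟩
    · simp only [Multiset.mem_add] at ht
      rcases ht with (ht | ht) | ht
      exacts [hsT t (Multiset.mem_of_mem_erase ht), hsbT t ht, hscT t ht]
    · rw [← hs, ← Multiset.prod_erase hy, Multiset.prod_add, Multiset.prod_add]
      ac_rfl
  have := le_csSup hRbdd ⟨_, hmem, rfl⟩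
  rw [← hcard, Multiset.card_add, Multiset.card_add, ← Multiset.card_erase_add_one hy] at this
  omega

end FinitelyGenerated

section Lengths

variable {H : Type*} [CommMonoid H]

theorem lengthSet_of_isUnit {a : H} (ha : IsUnit a) : lengthSet H a = {0} := by
  rw [lengthSet, if_pos ha]

theorem mem_lengthSet_iff_multiset {a : H} (ha : ¬IsUnit a) {ℓ : ℕ} :
    ℓ ∈ lengthSet H a ↔
      ∃ s : Multiset H, (∀ x ∈ s, Irreducible x) ∧ Multiset.card s = ℓ ∧ s.prod = a := by
  rw [lengthSet, if_neg ha]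
  constructor
  · rintro ⟨f, hf, rfl⟩
    exact ⟨Finset.univ.val.map f, by simpa using fun i => hf i, by simp, rfl⟩
  · rintro ⟨s, hs, rfl, rfl⟩
    rw [← Multiset.length_toList]
    exact ⟨fun i => s.toList[i.1], fun i => hs _ (Multiset.mem_toList.1 (List.getElem_mem _)),
      by rw [Fin.prod_univ_getElem, Multiset.prod_toList]⟩

/-- A unit left over when lifting a factorization of `Associates.mk a` back to `H` is absorbed
into one of the atoms. -/
theorem mem_lengthSet_iff_associates {a : H} (ha : ¬IsUnit a) {ℓ : ℕ} :
    ℓ ∈ lengthSet H a ↔ ∃ s : Multiset (Associates H), (∀ x ∈ s, Irreducible x) ∧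
      Multiset.card s = ℓ ∧ s.prod = Associates.mk a := by
  rw [mem_lengthSet_iff_multiset ha]
  constructor
  · rintro ⟨s, hs, rfl, rfl⟩
    exact ⟨s.map Associates.mk, by simpa [Associates.irreducible_mk_iff_s10] using hs,
      Multiset.card_map _ _, Associates.prod_mk⟩
  · rintro ⟨t, ht, rfl, hprod⟩
    obtain ⟨s, rfl⟩ := Multiset.map_surjective_of_surjective Associates.mk_surjective t
    simp only [Multiset.mem_map, forall_exists_index, and_imp, forall_apply_eq_imp_iff₂,
      Associates.irreducible_mk_iff_s10] at ht
    obtain ⟨u, hu⟩ := Associates.mk_eq_mk_iff_associated.1 (Associates.prod_mk.symm.trans hprod)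
    rcases Multiset.empty_or_exists_mem s with rfl | ⟨x, hx⟩
    · exact absurd (by simp [← hu]) ha
    obtain ⟨r, rfl⟩ := Multiset.exists_cons_of_mem hx
    refine ⟨(x * u) ::ₘ r, ?_, by simp, by rw [← hu, Multiset.prod_cons, Multiset.prod_cons,
      mul_right_comm]⟩
    simp only [Multiset.mem_cons, forall_eq_or_imp]
    exact ⟨Associated.irreducible ⟨u, rfl⟩ (ht x hx),
      fun y hy => ht y (Multiset.mem_cons_of_mem hy)⟩

theorem lengthSet_congr {a b : H} (h : Associated a b) : lengthSet H a = lengthSet H b := by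
  by_cases ha : IsUnit a
  · rw [lengthSet_of_isUnit ha, lengthSet_of_isUnit (h.isUnit ha)]
  have hb : ¬IsUnit b := fun hb => ha (h.symm.isUnit hb)
  ext ℓ
  rw [mem_lengthSet_iff_associates ha, mem_lengthSet_iff_associates hb,
    Associates.mk_eq_mk_iff_associated.2 h]

theorem add_mem_lengthSet_mul {a b : H} (ha : ¬IsUnit a) (hb : ¬IsUnit b) {k ℓ : ℕ}
    (hk : k ∈ lengthSet H a) (hℓ : ℓ ∈ lengthSet H b) : k + ℓ ∈ lengthSet H (a * b) := by
  obtain ⟨s, hs, rfl, rfl⟩ := (mem_lengthSet_iff_multiset ha).1 hk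
  obtain ⟨t, ht, rfl, rfl⟩ := (mem_lengthSet_iff_multiset hb).1 hℓ
  refine (mem_lengthSet_iff_multiset fun h => ha (isUnit_of_mul_isUnit_left h)).2
    ⟨s + t, ?_, Multiset.card_add s t, Multiset.prod_add s t⟩
  simpa only [Multiset.mem_add] using fun x hx => hx.elim (hs x) (ht x)

end Lengths

section FinitelyGeneratedReduction

variable {H : Type*} [CancelCommMonoid H] [Monoid.FG (Associates H)]

theorem exists_lengthSet_pow_bounds {a : H} (ha : ¬IsUnit a) :
    ∃ N C : ℕ, ∀ n ℓ : ℕ, ℓ ∈ lengthSet H (a ^ n) → n ≤ N * ℓ ∧ ℓ ≤ C * n := by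
  obtain ⟨N, C, hNC⟩ := exists_card_bounds_of_prod_eq_pow Monoid.FG.finite_setOf_irreducible_s10
    (fun _ ht => Irreducible.not_isUnit ht) (Associates.isUnit_mk.not.2 ha)
  refine ⟨N, C, fun n ℓ hℓ => ?_⟩
  rcases eq_or_ne n 0 with rfl | hn
  · simp_all [lengthSet_of_isUnit]
  obtain ⟨s, hs, rfl, hprod⟩ :=
    (mem_lengthSet_iff_associates ((isUnit_pow_iff hn).not.2 ha)).1 hℓ
  exact hNC n s hs (by rw [hprod, Associates.mk_pow])

theorem isBFMonoid_of_fg : IsBFMonoid H := by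
  refine ⟨fun a ha => ?_, fun a => ?_⟩
  · obtain ⟨s, hs, hprod⟩ := Monoid.FG.exists_multiset_irreducible_prod_eq_s10 (Associates.mk a)
    exact ⟨_, (mem_lengthSet_iff_associates ha).2 ⟨s, hs, rfl, hprod⟩⟩
  by_cases ha : IsUnit a
  · simp [lengthSet_of_isUnit ha]
  obtain ⟨_, C, hC⟩ := exists_lengthSet_pow_bounds ha
  exact (Set.finite_Iic C).subset fun ℓ hℓ => by simpa using (hC 1 ℓ (by simpa using hℓ)).2

end FinitelyGeneratedReduction

section Asymptotics

variable {H : Type*} [CommMonoid H]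

noncomputable def minLength (a : H) : ℕ := sInf (lengthSet H a)

noncomputable def maxLength (a : H) : ℕ := sSup (lengthSet H a)

noncomputable def asympMinLength (a : H) : ℝ :=
  limUnder atTop fun n : ℕ => (minLength (a ^ n) : ℝ) / n

noncomputable def asympMaxLength (a : H) : ℝ :=
  limUnder atTop fun n : ℕ => (maxLength (a ^ n) : ℝ) / n

/-- `ρ̄(a)`. The `limUnder`s above are junk unless the limits exist; they do in a BF-monoid for
`min` and under a linear bound on `max L(aⁿ)` for `max` (`IsBFMonoid.tendsto_maxLength_pow_div`). -/
noncomputable def asympElasticity (a : H) : ℝ := asympMaxLength a / asympMinLength a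

theorem elasticity_eq_maxLength_div_minLength {a : H} (ha : ¬IsUnit a) :
    elasticity H a = (maxLength a : ℝ) / minLength a := by
  rw [elasticity, if_neg ha, maxLength, minLength]

theorem minLength_of_isUnit {a : H} (ha : IsUnit a) : minLength a = 0 := by
  rw [minLength, lengthSet_of_isUnit ha, csInf_singleton]

theorem maxLength_of_isUnit {a : H} (ha : IsUnit a) : maxLength a = 0 := by
  rw [maxLength, lengthSet_of_isUnit ha, csSup_singleton]

theorem asympElasticity_congr {a b : H} (h : Associated a b) :
    asympElasticity a = asympElasticity b := by
  have hpow (n : ℕ) : lengthSet H (a ^ n) = lengthSet H (b ^ n) := lengthSet_congr h.pow_pow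
  simp only [asympElasticity, asympMaxLength, asympMinLength, maxLength, minLength, hpow]

theorem IsBFMonoid.minLength_mem (hBF : IsBFMonoid H) {a : H} (ha : ¬IsUnit a) :
    minLength a ∈ lengthSet H a :=
  Nat.sInf_mem (hBF.1 a ha)

theorem IsBFMonoid.maxLength_mem (hBF : IsBFMonoid H) {a : H} (ha : ¬IsUnit a) :
    maxLength a ∈ lengthSet H a :=
  Nat.sSup_mem (hBF.1 a ha) (hBF.2 a).bddAbove

theorem IsBFMonoid.minLength_mul_le (hBF : IsBFMonoid H) (a b : H) :
    minLength (a * b) ≤ minLength a + minLength b := by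
  by_cases ha : IsUnit a
  · rw [minLength_of_isUnit ha, zero_add, minLength, minLength,
      lengthSet_congr (associated_unit_mul_left b a ha)]
  by_cases hb : IsUnit b
  · rw [minLength_of_isUnit hb, add_zero, minLength, minLength,
      lengthSet_congr (associated_mul_unit_left a b hb)]
  exact Nat.sInf_le (add_mem_lengthSet_mul ha hb (hBF.minLength_mem ha) (hBF.minLength_mem hb))

theorem IsBFMonoid.maxLength_add_le (hBF : IsBFMonoid H) (a b : H) :
    maxLength a + maxLength b ≤ maxLength (a * b) := by
  by_cases ha : IsUnit a
  · rw [maxLength_of_isUnit ha, zero_add, maxLength, maxLength,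
      lengthSet_congr (associated_unit_mul_left b a ha)]
  by_cases hb : IsUnit b
  · rw [maxLength_of_isUnit hb, add_zero, maxLength, maxLength,
      lengthSet_congr (associated_mul_unit_left a b hb)]
  exact le_csSup (hBF.2 _).bddAbove
    (add_mem_lengthSet_mul ha hb (hBF.maxLength_mem ha) (hBF.maxLength_mem hb))

theorem IsBFMonoid.tendsto_minLength_pow_div (hBF : IsBFMonoid H) (a : H) :
    Tendsto (fun n : ℕ => (minLength (a ^ n) : ℝ) / n) atTop (𝓝 (asympMinLength a)) := by
  have hsub : Subadditive fun n => (minLength (a ^ n) : ℝ) := fun m n => by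
    dsimp only
    rw [pow_add]
    exact_mod_cast hBF.minLength_mul_le _ _
  have h := hsub.tendsto_lim ⟨0, by rintro _ ⟨n, rfl⟩; positivity⟩
  rwa [asympMinLength, h.limUnder_eq]

theorem IsBFMonoid.tendsto_maxLength_pow_div (hBF : IsBFMonoid H) {a : H} {C : ℕ}
    (hC : ∀ n : ℕ, maxLength (a ^ n) ≤ C * n) :
    Tendsto (fun n : ℕ => (maxLength (a ^ n) : ℝ) / n) atTop (𝓝 (asympMaxLength a)) := by
  have hsub : Subadditive fun n => -(maxLength (a ^ n) : ℝ) := fun m n => by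
    have : (maxLength (a ^ m) : ℝ) + maxLength (a ^ n) ≤ maxLength (a ^ m * a ^ n) := by
      exact_mod_cast hBF.maxLength_add_le (a ^ m) (a ^ n)
    dsimp only
    rw [pow_add]
    linarith
  have hbdd : BddBelow (Set.range fun n : ℕ => -(maxLength (a ^ n) : ℝ) / n) := by
    refine ⟨-C, ?_⟩
    rintro _ ⟨n, rfl⟩
    rcases Nat.eq_zero_or_pos n with rfl | hn
    · simp
    · dsimp only
      rw [neg_div, neg_le_neg_iff, div_le_iff₀ (by positivity)]
      exact_mod_cast hC n
  have h := (hsub.tendsto_lim hbdd).neg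
  simp only [neg_div, neg_neg] at h
  rwa [asympMaxLength, h.limUnder_eq]

theorem IsBFMonoid.asympMinLength_pos (hBF : IsBFMonoid H) {a : H} {K : ℕ}
    (hK : ∀ n : ℕ, n ≤ K * minLength (a ^ n)) : 0 < asympMinLength a := by
  have hK0 : (0 : ℝ) < K := Nat.cast_pos.2 (Nat.pos_of_ne_zero fun h => by simpa [h] using hK 1)
  refine (inv_pos.2 hK0).trans_le (ge_of_tendsto (hBF.tendsto_minLength_pow_div a) ?_)
  filter_upwards [eventually_gt_atTop 0] with n hn
  rw [le_div_iff₀ (by positivity), inv_mul_le_iff₀ hK0]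
  exact_mod_cast hK n

end Asymptotics

theorem min_div_le_add_div_add {a b c d : ℝ} (hc : 0 < c) (hd : 0 < d) :
    min (a / c) (b / d) ≤ (a + b) / (c + d) := by
  rw [le_div_iff₀ (by positivity), mul_add]
  exact add_le_add ((le_div_iff₀ hc).1 (min_le_left _ _)) ((le_div_iff₀ hd).1 (min_le_right _ _))

section FinitelyGeneratedAsymptotics

variable {H : Type*} [CancelCommMonoid H] [Monoid.FG (Associates H)]

theorem tendsto_maxLength_pow_div_of_fg {a : H} (ha : ¬IsUnit a) :
    Tendsto (fun n : ℕ => (maxLength (a ^ n) : ℝ) / n) atTop (𝓝 (asympMaxLength a)) := by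
  obtain ⟨_, C, hC⟩ := exists_lengthSet_pow_bounds ha
  refine isBFMonoid_of_fg.tendsto_maxLength_pow_div (C := C) fun n => ?_
  rcases eq_or_ne n 0 with rfl | hn
  · simp [maxLength_of_isUnit]
  · exact (hC n _ (isBFMonoid_of_fg.maxLength_mem ((isUnit_pow_iff hn).not.2 ha))).2

theorem asympMinLength_pos_of_fg {a : H} (ha : ¬IsUnit a) : 0 < asympMinLength a := by
  obtain ⟨N, _, hN⟩ := exists_lengthSet_pow_bounds ha
  refine isBFMonoid_of_fg.asympMinLength_pos (K := N) fun n => ?_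
  rcases eq_or_ne n 0 with rfl | hn
  · exact Nat.zero_le _
  · exact (hN n _ (isBFMonoid_of_fg.minLength_mem ((isUnit_pow_iff hn).not.2 ha))).1

theorem tendsto_elasticity_pow {a : H} (ha : ¬IsUnit a) :
    Tendsto (fun n : ℕ => elasticity H (a ^ n)) atTop (𝓝 (asympElasticity a)) := by
  refine ((tendsto_maxLength_pow_div_of_fg ha).div
    (isBFMonoid_of_fg.tendsto_minLength_pow_div a) (asympMinLength_pos_of_fg ha).ne').congr' ?_
  filter_upwards [eventually_ne_atTop 0] with n hn
  rw [Pi.div_apply, elasticity_eq_maxLength_div_minLength ((isUnit_pow_iff hn).not.2 ha),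
    div_div_div_cancel_right₀ (Nat.cast_ne_zero.2 hn)]

theorem min_asympElasticity_le_mul {a b : H} (ha : ¬IsUnit a) (hb : ¬IsUnit b) :
    min (asympElasticity a) (asympElasticity b) ≤ asympElasticity (a * b) := by
  have hab : ¬IsUnit (a * b) := fun h => ha (isUnit_of_mul_isUnit_left h)
  have hBF : IsBFMonoid H := isBFMonoid_of_fg
  have hmax : asympMaxLength a + asympMaxLength b ≤ asympMaxLength (a * b) :=
    le_of_tendsto_of_tendsto' ((tendsto_maxLength_pow_div_of_fg ha).add
      (tendsto_maxLength_pow_div_of_fg hb)) (tendsto_maxLength_pow_div_of_fg hab) fun n => by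
      rw [← add_div, mul_pow]
      gcongr
      exact_mod_cast hBF.maxLength_add_le _ _
  have hmin : asympMinLength (a * b) ≤ asympMinLength a + asympMinLength b :=
    le_of_tendsto_of_tendsto' (hBF.tendsto_minLength_pow_div (a * b))
      ((hBF.tendsto_minLength_pow_div a).add (hBF.tendsto_minLength_pow_div b)) fun n => by
      rw [← add_div, mul_pow]
      gcongr
      exact_mod_cast hBF.minLength_mul_le _ _
  have hmax_nonneg : 0 ≤ asympMaxLength a + asympMaxLength b :=
    ge_of_tendsto' ((tendsto_maxLength_pow_div_of_fg ha).add (tendsto_maxLength_pow_div_of_fg hb))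
      fun n => by positivity
  calc min (asympElasticity a) (asympElasticity b)
      ≤ (asympMaxLength a + asympMaxLength b) / (asympMinLength a + asympMinLength b) :=
        min_div_le_add_div_add (asympMinLength_pos_of_fg ha) (asympMinLength_pos_of_fg hb)
    _ ≤ asympElasticity (a * b) :=
        div_le_div₀ (hmax_nonneg.trans hmax) hmax (asympMinLength_pos_of_fg hab) hmin

theorem exists_irreducible_asympElasticity_le {a : H} (ha : ¬IsUnit a) :
    ∃ u : H, Irreducible u ∧ asympElasticity u ≤ asympElasticity a := by
  obtain ⟨ℓ, hℓ⟩ := isBFMonoid_of_fg.1 a ha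
  obtain ⟨s, hs, -, rfl⟩ := (mem_lengthSet_iff_multiset ha).1 hℓ
  clear hℓ
  induction s using Multiset.induction_on with
  | empty => exact absurd isUnit_one ha
  | cons x s ih =>
    have hx : Irreducible x := hs x (Multiset.mem_cons_self x s)
    rw [Multiset.prod_cons] at ha ⊢
    by_cases hsu : IsUnit s.prod
    · exact ⟨x, hx, (asympElasticity_congr (associated_mul_unit_right x _ hsu)).le⟩
    obtain ⟨u, hu, hule⟩ := ih (fun y hy => hs y (Multiset.mem_cons_of_mem hy)) hsu
    rcases min_le_iff.1 (min_asympElasticity_le_mul hx.not_isUnit hsu) with hle | hle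
    exacts [⟨x, hx, hle⟩, ⟨u, hu, hule.trans hle⟩]

theorem exists_irreducible_forall_asympElasticity_le (hne : ∃ a : H, ¬IsUnit a) :
    ∃ b : H, Irreducible b ∧ ∀ a : H, ¬IsUnit a → asympElasticity b ≤ asympElasticity a := by
  obtain ⟨a, ha⟩ := hne
  obtain ⟨u, hu, -⟩ := exists_irreducible_asympElasticity_le ha
  obtain ⟨v, hv, hmin⟩ := Set.exists_min_image {y : Associates H | Irreducible y}
    (fun y => asympElasticity (Quot.out y))
    Monoid.FG.finite_setOf_irreducible_s10 ⟨_, Associates.irreducible_mk_iff_s10.2 hu⟩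
  refine ⟨Quot.out v, Associates.irreducible_mk_iff_s10.1 (by rwa [Associates.quot_out]),
    fun a ha => ?_⟩
  obtain ⟨w, hw, hwa⟩ := exists_irreducible_asympElasticity_le ha
  calc asympElasticity (Quot.out v)
      ≤ asympElasticity (Quot.out (Associates.mk w)) :=
        hmin _ (Associates.irreducible_mk_iff_s10.2 hw)
    _ = asympElasticity w := asympElasticity_congr (Associates.mk_quot_out w)
    _ ≤ asympElasticity a := hwa

end FinitelyGeneratedAsymptotics

theorem isLeast_setOf_tendsto {α : Type*} {P : α → Prop} {u : α → ℕ → ℝ} {g : α → ℝ}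
    (hu : ∀ x, P x → Tendsto (u x) atTop (𝓝 (g x))) {b : α} (hb : P b)
    (hmin : ∀ x, P x → g b ≤ g x) :
    IsLeast {r : EReal | ∃ x, P x ∧ Tendsto (fun n => (u x n : EReal)) atTop (𝓝 r)} (g b) := by
  refine ⟨⟨b, hb, EReal.tendsto_coe.2 (hu b hb)⟩, ?_⟩
  rintro r ⟨x, hx, hr⟩
  rw [tendsto_nhds_unique hr (EReal.tendsto_coe.2 (hu x hx))]
  exact EReal.coe_le_coe_iff.2 (hmin x hx)

/-- If `H_red = H/H^×` is finitely generated and `H ≠ H^×`, then there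
is an atom `b` with `lim ρ(bⁿ) = inf R̄(H)`; in particular `inf R̄(H)` is the minimum of
the asymptotic elasticities of atoms, and the infimum of `R̄(H)` is attained. -/
theorem statement10 (H : Type*) [CancelCommMonoid H]
    (hfg : Monoid.FG (Associates H)) (hne : ∃ a : H, ¬ IsUnit a) :
    ∃ b : H, Irreducible b ∧
      Tendsto (fun n : ℕ => ((elasticity H (b ^ n) : ℝ) : EReal)) atTop
        (nhds (sInf (asympSet H))) ∧
      sInf (asympSet H) ∈ asympSet H ∧
      sInf (asympSet H) =
        sInf {r : EReal | ∃ u : H, Irreducible u ∧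
          Tendsto (fun n : ℕ => ((elasticity H (u ^ n) : ℝ) : EReal)) atTop (nhds r)} := by
  obtain ⟨b, hb, hmin⟩ := exists_irreducible_forall_asympElasticity_le hne
  have hnonunits : IsLeast (asympSet H) (asympElasticity b) :=
    isLeast_setOf_tendsto (fun a ha => tendsto_elasticity_pow ha) hb.not_isUnit hmin
  have hatoms : IsLeast {r : EReal | ∃ u : H, Irreducible u ∧
      Tendsto (fun n : ℕ => ((elasticity H (u ^ n) : ℝ) : EReal)) atTop (nhds r)}
      (asympElasticity b) :=
    isLeast_setOf_tendsto (fun u hu => tendsto_elasticity_pow hu.not_isUnit) hb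
      fun u hu => hmin u hu.not_isUnit
  rw [hnonunits.csInf_eq, hatoms.csInf_eq]
  exact ⟨b, hb, EReal.tendsto_coe.2 (tendsto_elasticity_pow hb.not_isUnit), hnonunits.1, rfl⟩
end
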